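/- arXiv:2602.21751 — 4 statements merged into one kernel-verified Lean document; each statement's English description precedes it below -/
import Mathlib

section
/- Let n ≥ 4, λ = (1,1,0,…,0) ∈ ℝⁿ, and let ξ ∈ ℝⁿ satisfy ∑ᵢ ξᵢ = 2, 0 < ξᵢ < 1 for all i, and ∑_{j∈S} ξ_j ≠ 1 for every subset S ⊆ {1,…,n}. Then for permutations ν, τ ∈ S_n, there exists k ∈ {1,…,n−1} with ∑_{i=k+1}^{n} λ_{ν(i)} < ∑_{i=k+1}^{n} ξ_{τ(i)} if and only if one of the following holds: (1) ν(n) ∈ {3,…,n}; (2) {ν(1), ν(n)} = {1,2}; (3) ν(n) ∈ {1,2}, ν(j) ∈ {1,2} for some 2 ≤ j ≤ n−2, and ∑_{i=j+1}^{n} ξ_{τ(i)} > 1. -/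
open Finset

/-- For `n ≥ 4`, `λ = (1,1,0,…,0)` and a regular value `ξ`
(`∑ξᵢ = 2`, `0 < ξᵢ < 1`, no subset sum equals 1), for `ν, τ ∈ Sₙ`:
there is `k ∈ {1,…,n−1}` with `∑_{i=k+1}^n λ_{ν(i)} < ∑_{i=k+1}^n ξ_{τ(i)}`
iff (1) `ν(n) ∈ {3,…,n}`, or (2) `{ν(1),ν(n)} = {1,2}`, or
(3) `ν(n) ∈ {1,2}`, `ν(j) ∈ {1,2}` for some `2 ≤ j ≤ n−2`, and
`∑_{i=j+1}^n ξ_{τ(i)} > 1`.  (Indices written 0-based via `Fin n`: the 1-based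
index `m` is the element of `Fin n` with value `m−1`, and `{1,2}` becomes
`{i : val < 2}`.) -/
theorem stmt4 (n : ℕ) (hn : 4 ≤ n)
    (lam ξ : Fin n → ℝ)
    (hlam : ∀ i, lam i = if i.val < 2 then 1 else 0)
    (hξsum : ∑ i, ξ i = 2)
    (hξpos : ∀ i, 0 < ξ i) (hξlt : ∀ i, ξ i < 1)
    (hξreg : ∀ S : Finset (Fin n), ∑ i ∈ S, ξ i ≠ 1)
    (ν τ : Equiv.Perm (Fin n)) :
    (∃ k : ℕ, 1 ≤ k ∧ k ≤ n - 1 ∧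
        (∑ i ∈ Finset.univ.filter (fun i : Fin n => k ≤ i.val), lam (ν i)) <
          ∑ i ∈ Finset.univ.filter (fun i : Fin n => k ≤ i.val), ξ (τ i)) ↔
      (2 ≤ (ν ⟨n - 1, by omega⟩).val ∨
        ((ν ⟨0, by omega⟩).val < 2 ∧ (ν ⟨n - 1, by omega⟩).val < 2) ∨
        ((ν ⟨n - 1, by omega⟩).val < 2 ∧
          ∃ j : Fin n, 1 ≤ j.val ∧ j.val ≤ n - 3 ∧ (ν j).val < 2 ∧
            1 < ∑ i ∈ Finset.univ.filter (fun i : Fin n => j.val < i.val), ξ (τ i))) := by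
  have hn1 : n - 1 < n := by omega
  have hn0 : 0 < n := by omega
  have hn0' : (0 : ℕ) < n := hn0
  have hn1' : (1 : ℕ) < n := by omega
  set a : Fin n := ν.symm ⟨0, hn0⟩ with ha
  set b : Fin n := ν.symm ⟨1, hn1'⟩ with hb
  have hνa : ν a = ⟨0, hn0⟩ := ν.apply_symm_apply _
  have hνb : ν b = ⟨1, hn1'⟩ := ν.apply_symm_apply _
  have hab : a ≠ b := by
    intro h
    rw [ha, hb] at h
    have := ν.symm.injective h
    simp [Fin.ext_iff] at this
  have hPair : ∀ c : Fin n, (ν c).val < 2 → c = a ∨ c = b := by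
    intro c hc
    have h2 : ν c = ⟨0, hn0⟩ ∨ ν c = ⟨1, hn1'⟩ := by
      have hc' : (ν c).val = 0 ∨ (ν c).val = 1 := by omega
      rcases hc' with h | h
      · exact Or.inl (Fin.ext h)
      · exact Or.inr (Fin.ext h)
    rcases h2 with h | h
    · left; rw [ha, ← h, Equiv.symm_apply_apply]
    · right; rw [hb, ← h, Equiv.symm_apply_apply]
  -- the lambda-sum formula
  have hL : ∀ k : ℕ, (∑ i ∈ Finset.univ.filter (fun i : Fin n => k ≤ i.val), lam (ν i)) =
      (if k ≤ a.val then (1:ℝ) else 0) + (if k ≤ b.val then 1 else 0) := by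
    intro k
    have hsplit : ∀ i : Fin n, lam (ν i) =
        (if i = a then (1:ℝ) else 0) + (if i = b then 1 else 0) := by
      intro i
      rw [hlam]
      by_cases hia : i = a
      · subst hia; rw [hνa]; simp [hab]
      · by_cases hib : i = b
        · subst hib; rw [hνb]; simp [hia]
        · have hnot : ¬ (ν i).val < 2 := fun h => by
            rcases hPair i h with h' | h' <;> [exact hia h'; exact hib h']
          simp [hnot, hia, hib]
    rw [Finset.sum_congr rfl (fun i _ => hsplit i), Finset.sum_add_distrib]
    rw [Finset.sum_ite_eq', Finset.sum_ite_eq']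
    simp
  -- the xi-tail facts
  have hTpos : ∀ k : ℕ, k ≤ n - 1 →
      0 < ∑ i ∈ Finset.univ.filter (fun i : Fin n => k ≤ i.val), ξ (τ i) := by
    intro k hk
    apply Finset.sum_pos (fun i _ => hξpos _)
    refine ⟨⟨n - 1, hn1⟩, ?_⟩
    simp only [Finset.mem_filter, Finset.mem_univ, true_and]
    omega
  have hTmono : ∀ k k' : ℕ, k ≤ k' →
      (∑ i ∈ Finset.univ.filter (fun i : Fin n => k' ≤ i.val), ξ (τ i)) ≤
        ∑ i ∈ Finset.univ.filter (fun i : Fin n => k ≤ i.val), ξ (τ i) := by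
    intro k k' hkk
    apply Finset.sum_le_sum_of_subset_of_nonneg
    · intro i hi
      simp only [Finset.mem_filter, Finset.mem_univ, true_and] at hi ⊢
      omega
    · exact fun i _ _ => (hξpos _).le
  have hfilt0 : Finset.univ.filter (fun i : Fin n => ¬ 1 ≤ i.val) = {(⟨0, hn0⟩ : Fin n)} := by
    ext i
    simp [Fin.ext_iff]
  have hsum2 : ∑ i, ξ (τ i) = 2 := by
    rw [Equiv.sum_comp τ ξ]; exact hξsum
  have hT1eq : (∑ i ∈ Finset.univ.filter (fun i : Fin n => 1 ≤ i.val), ξ (τ i)) + ξ (τ ⟨0, hn0⟩) = 2 := by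
    rw [← hsum2, ← Finset.sum_filter_add_sum_filter_not Finset.univ (fun i : Fin n => 1 ≤ i.val) (fun i => ξ (τ i)), hfilt0, Finset.sum_singleton]
  have hT1gt : 1 < ∑ i ∈ Finset.univ.filter (fun i : Fin n => 1 ≤ i.val), ξ (τ i) := by
    have := hξlt (τ ⟨0, hn0⟩); linarith
  have hT1lt : (∑ i ∈ Finset.univ.filter (fun i : Fin n => 1 ≤ i.val), ξ (τ i)) < 2 := by
    have := hξpos (τ ⟨0, hn0⟩); linarith
  have hfiltlast : Finset.univ.filter (fun i : Fin n => n - 1 ≤ i.val) = {(⟨n - 1, hn1⟩ : Fin n)} := by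
    ext i
    simp only [Finset.mem_filter, Finset.mem_univ, true_and, Finset.mem_singleton, Fin.ext_iff]
    have := i.isLt
    omega
  have hTlast : (∑ i ∈ Finset.univ.filter (fun i : Fin n => n - 1 ≤ i.val), ξ (τ i)) < 1 := by
    rw [hfiltlast, Finset.sum_singleton]; exact hξlt _
  constructor
  · rintro ⟨k, hk1, hk2, hlt⟩
    by_cases hcase : 2 ≤ (ν ⟨n - 1, hn1⟩).val
    · exact Or.inl hcase
    · push_neg at hcase
      have hNab : (⟨n - 1, hn1⟩ : Fin n) = a ∨ (⟨n - 1, hn1⟩ : Fin n) = b := hPair _ hcase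
      obtain ⟨p, hpne, hp2, hLp⟩ : ∃ p : Fin n, p.val ≠ n - 1 ∧ (ν p).val < 2 ∧
          (if k ≤ a.val then (1:ℝ) else 0) + (if k ≤ b.val then 1 else 0) =
            (if k ≤ n - 1 then 1 else 0) + (if k ≤ p.val then 1 else 0) := by
        rcases hNab with h | h
        · refine ⟨b, ?_, by rw [hνb]; exact Nat.one_lt_two, ?_⟩
          · intro hbv
            exact hab ((Fin.ext hbv : b = (⟨n - 1, hn1⟩ : Fin n)).trans h).symm
          · have hav : a.val = n - 1 := by rw [← h]
            rw [hav]
        · refine ⟨a, ?_, by rw [hνa]; exact Nat.zero_lt_two, ?_⟩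
          · intro hav
            exact hab ((Fin.ext hav : a = (⟨n - 1, hn1⟩ : Fin n)).trans h)
          · have hbv : b.val = n - 1 := by rw [← h]
            rw [hbv, add_comm]
      rw [hL k, hLp, if_pos hk2] at hlt
      have hite : (0:ℝ) ≤ if k ≤ p.val then 1 else 0 := by split <;> norm_num
      have hTgt1 : 1 < ∑ i ∈ Finset.univ.filter (fun i : Fin n => k ≤ i.val), ξ (τ i) := by
        linarith
      have hT2 : (∑ i ∈ Finset.univ.filter (fun i : Fin n => k ≤ i.val), ξ (τ i)) < 2 :=
        lt_of_le_of_lt (hTmono 1 k hk1) hT1lt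
      have hpk : p.val < k := by
        by_contra hcon
        rw [if_pos (by omega)] at hlt
        linarith
      by_cases hp0 : p.val = 0
      · have hpZ : p = (⟨0, hn0⟩ : Fin n) := Fin.ext hp0
        exact Or.inr (Or.inl ⟨hpZ ▸ hp2, hcase⟩)
      · have hpn2 : p.val ≠ n - 2 := by
          intro h
          have hk' : k = n - 1 := by omega
          rw [hk'] at hTgt1
          linarith
        refine Or.inr (Or.inr ⟨hcase, p, by omega, by omega, hp2, ?_⟩)
        have heq : Finset.univ.filter (fun i : Fin n => p.val < i.val) =
            Finset.univ.filter (fun i : Fin n => p.val + 1 ≤ i.val) := by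
          ext i
          simp only [Finset.mem_filter, Finset.mem_univ, true_and]
          omega
        rw [heq]
        exact lt_of_lt_of_le hTgt1 (hTmono (p.val + 1) k (by omega))
  · rintro (h1 | ⟨hz, hn'⟩ | ⟨hn', j, hj1, hj3, hνj, hjsum⟩)
    · -- case (1)
      have h1' : 2 ≤ (ν ⟨n - 1, hn1⟩).val := h1
      have haN : a.val ≠ n - 1 := by
        intro h
        have heq : a = (⟨n - 1, hn1⟩ : Fin n) := Fin.ext h
        rw [← heq, hνa] at h1'
        simp at h1'
      have hbN : b.val ≠ n - 1 := by
        intro h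
        have heq : b = (⟨n - 1, hn1⟩ : Fin n) := Fin.ext h
        rw [← heq, hνb] at h1'
        simp at h1'
      have hav := a.isLt
      have hbv := b.isLt
      refine ⟨max a.val b.val + 1, by omega, by omega, ?_⟩
      rw [hL, if_neg (by omega), if_neg (by omega)]
      have := hTpos (max a.val b.val + 1) (by omega)
      linarith
    · -- case (2)
      have hz' : (ν ⟨0, hn0⟩).val < 2 := hz
      have hn'' : (ν ⟨n - 1, hn1⟩).val < 2 := hn'
      refine ⟨1, le_refl 1, by omega, ?_⟩
      rw [hL]
      rcases hPair _ hz' with hZa | hZb <;> rcases hPair _ hn'' with hNa | hNb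
      · exfalso
        have : (⟨0, hn0⟩ : Fin n) = (⟨n - 1, hn1⟩ : Fin n) := hZa.trans hNa.symm
        simp [Fin.ext_iff] at this
        omega
      · have hav : a.val = 0 := by rw [← hZa]
        have hbv : b.val = n - 1 := by rw [← hNb]
        rw [if_neg (by omega), if_pos (by omega)]
        linarith
      · have hbv : b.val = 0 := by rw [← hZb]
        have hav : a.val = n - 1 := by rw [← hNa]
        rw [if_pos (by omega), if_neg (by omega)]
        linarith
      · exfalso
        have : (⟨0, hn0⟩ : Fin n) = (⟨n - 1, hn1⟩ : Fin n) := hZb.trans hNb.symm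
        simp [Fin.ext_iff] at this
        omega
    · -- case (3)
      have hn'' : (ν ⟨n - 1, hn1⟩).val < 2 := hn'
      have heq : Finset.univ.filter (fun i : Fin n => j.val < i.val) =
          Finset.univ.filter (fun i : Fin n => j.val + 1 ≤ i.val) := by
        ext i
        simp only [Finset.mem_filter, Finset.mem_univ, true_and]
        omega
      rw [heq] at hjsum
      refine ⟨j.val + 1, by omega, by omega, ?_⟩
      rw [hL]
      have hjN : j ≠ (⟨n - 1, hn1⟩ : Fin n) := by
        intro h
        have : j.val = n - 1 := by rw [h]
        omega
      rcases hPair _ hνj with hja | hjb <;> rcases hPair _ hn'' with hNa | hNb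
      · exact absurd (hja.trans hNa.symm) hjN
      · have hav : a.val = j.val := by rw [← hja]
        have hbv : b.val = n - 1 := by rw [← hNb]
        rw [hav, if_neg (by omega), if_pos (by omega)]
        linarith
      · have hbv : b.val = j.val := by rw [← hjb]
        have hav : a.val = n - 1 := by rw [← hNa]
        rw [hbv, if_pos (by omega), if_neg (by omega)]
        linarith
      · exact absurd (hjb.trans hNb.symm) hjN
end

section
/- Let R be a commutative ℂ-algebra with elements u₁,…,u₅, s satisfying: u₁+…+u₅ = 0; uᵢ² − s·uᵢ + p = 0 for all i (for some p ∈ R); and (uᵢ−u_j)·s = (uᵢ−u_j)(u_k+u_l) whenever i,j,k,l are four distinct indices. Then uᵢ² = u_j² for all i,j, and uᵢu_j = u_ku_l for all distinct quadruples i,j,k,l, and uᵢ·s = 0 for all i. -/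
/-- Let `R` be a commutative ℂ-algebra with elements
`u₁,…,u₅, s, p` satisfying `u₁+…+u₅ = 0`, `uᵢ² − s·uᵢ + p = 0` for all `i`,
and `(uᵢ−u_j)s = (uᵢ−u_j)(u_k+u_l)` for all four pairwise distinct indices
`i,j,k,l`. Then `uᵢ² = u_j²` for all `i,j`, `uᵢu_j = u_ku_l` for all pairwise
distinct quadruples, and `uᵢ·s = 0` for all `i`. -/
theorem stmt14 (R : Type*) [CommRing R] [Algebra ℂ R]
    (u : Fin 5 → R) (s p : R)
    (hsum : ∑ i, u i = 0)
    (hquad : ∀ i, u i ^ 2 - s * u i + p = 0)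
    (hdiff : ∀ i j k l : Fin 5, i ≠ j → i ≠ k → i ≠ l → j ≠ k → j ≠ l → k ≠ l →
      (u i - u j) * s = (u i - u j) * (u k + u l)) :
    (∀ i j : Fin 5, u i ^ 2 = u j ^ 2) ∧
    (∀ i j k l : Fin 5, i ≠ j → i ≠ k → i ≠ l → j ≠ k → j ≠ l → k ≠ l →
      u i * u j = u k * u l) ∧
    (∀ i : Fin 5, u i * s = 0) := by
  -- positive naturals are invertible in a ℂ-algebra
  have hcancel : ∀ (n : ℕ) (x : R), n ≠ 0 → (n : R) * x = 0 → x = 0 := by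
    intro n x hn h
    have h5 : (algebraMap ℂ R) ((n : ℂ)⁻¹) * ((n : R) * x) = x := by
      rw [← map_natCast (algebraMap ℂ R) n, ← mul_assoc, ← map_mul,
        inv_mul_cancel₀ (Nat.cast_ne_zero.mpr hn), map_one, one_mul]
    rw [h, mul_zero] at h5
    exact h5.symm
  have hsum' : u 0 + u 1 + u 2 + u 3 + u 4 = 0 := by
    rw [← Fin.sum_univ_five]; exact hsum
  -- all squares equal `u 0 ^ 2` (key: `5 * (u j ^ 2 - u 0 ^ 2) = 0`)
  have h1 : u 1 ^ 2 = u 0 ^ 2 := by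
    have h := hcancel 5 (u 1 ^ 2 - u 0 ^ 2) (by norm_num) (by
      push_cast
      linear_combination 3 * hquad 1 - 3 * hquad 0
        + hdiff 1 0 2 3 (by decide) (by decide) (by decide) (by decide) (by decide) (by decide)
        + hdiff 1 0 2 4 (by decide) (by decide) (by decide) (by decide) (by decide) (by decide)
        + hdiff 1 0 3 4 (by decide) (by decide) (by decide) (by decide) (by decide) (by decide)
        + 2 * (u 1 - u 0) * hsum')
    exact sub_eq_zero.mp h
  have h2 : u 2 ^ 2 = u 0 ^ 2 := by
    have h := hcancel 5 (u 2 ^ 2 - u 0 ^ 2) (by norm_num) (by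
      push_cast
      linear_combination 3 * hquad 2 - 3 * hquad 0
        + hdiff 2 0 1 3 (by decide) (by decide) (by decide) (by decide) (by decide) (by decide)
        + hdiff 2 0 1 4 (by decide) (by decide) (by decide) (by decide) (by decide) (by decide)
        + hdiff 2 0 3 4 (by decide) (by decide) (by decide) (by decide) (by decide) (by decide)
        + 2 * (u 2 - u 0) * hsum')
    exact sub_eq_zero.mp h
  have h3 : u 3 ^ 2 = u 0 ^ 2 := by
    have h := hcancel 5 (u 3 ^ 2 - u 0 ^ 2) (by norm_num) (by
      push_cast
      linear_combination 3 * hquad 3 - 3 * hquad 0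
        + hdiff 3 0 1 2 (by decide) (by decide) (by decide) (by decide) (by decide) (by decide)
        + hdiff 3 0 1 4 (by decide) (by decide) (by decide) (by decide) (by decide) (by decide)
        + hdiff 3 0 2 4 (by decide) (by decide) (by decide) (by decide) (by decide) (by decide)
        + 2 * (u 3 - u 0) * hsum')
    exact sub_eq_zero.mp h
  have h4 : u 4 ^ 2 = u 0 ^ 2 := by
    have h := hcancel 5 (u 4 ^ 2 - u 0 ^ 2) (by norm_num) (by
      push_cast
      linear_combination 3 * hquad 4 - 3 * hquad 0
        + hdiff 4 0 1 2 (by decide) (by decide) (by decide) (by decide) (by decide) (by decide)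
        + hdiff 4 0 1 3 (by decide) (by decide) (by decide) (by decide) (by decide) (by decide)
        + hdiff 4 0 2 3 (by decide) (by decide) (by decide) (by decide) (by decide) (by decide)
        + 2 * (u 4 - u 0) * hsum')
    exact sub_eq_zero.mp h
  have hsq : ∀ i : Fin 5, u i ^ 2 = u 0 ^ 2 := by
    intro i
    fin_cases i
    · rfl
    · exact h1
    · exact h2
    · exact h3
    · exact h4
  -- `u i * s` is independent of `i`
  have hsi : ∀ i j : Fin 5, u i * s = u j * s := by
    intro i j
    linear_combination (hsq i - hsq j) - hquad i + hquad j
  -- `u i * s = 0`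
  have hs : ∀ i : Fin 5, u i * s = 0 := by
    have hs0 : u 0 * s = 0 := by
      refine hcancel 5 (u 0 * s) (by norm_num) ?_
      push_cast
      linear_combination s * hsum' + hsi 0 1 + hsi 0 2 + hsi 0 3 + hsi 0 4
    intro i
    exact (hsi i 0).trans hs0
  refine ⟨fun i j => (hsq i).trans (hsq j).symm, ?_, hs⟩
  -- products: from `(u a - u b) * s = 0` and `hdiff`
  intro i j k l hij hik hil hjk hjl hkl
  refine sub_eq_zero.mp (hcancel 2 (u i * u j - u k * u l) (by norm_num) ?_)
  push_cast
  linear_combination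
    - hdiff i k j l hik hij hil hjk.symm hkl hjl
    - hdiff j l i k hjl hij.symm hjk hil.symm hkl.symm hik
    + hs i + hs j - hs k - hs l
end

section
/- In the ring R = ℂ[x,u₁,…,u₅]/⟨∑uᵢ, uᵢu_j − x² (i≠j), u_l² + 4x² (all l), uᵢx (all i)⟩, define D¹² = u₂−u₃, D¹³ = u₄−u₅, D¹⁴ = √5(2x+u₂+u₃), D¹⁵ = √5(−2x+u₄+u₅), and D²³ = (1/√5)(a(u₂+u₃)+b(u₄+u₅)+cx) where b = −a−10, c = 5a+25, and a is a root of a²+10a+15 = 0. Then D¹ⁱD¹ʲ = 0 for i≠j, D¹²D²³ = D¹³D²³ = 0, (D¹²)² = (D¹³)² = (D¹⁴)² = (D¹⁵)² = (D²³)² = −10x², and D¹⁴D²³ = D¹⁵D²³ = 10x². -/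
open MvPolynomial

namespace Stmt15

/-- The variable `x` of `ℂ[x,u₁,…,u₅]` (variable index 0 of 6). -/
noncomputable def xx : MvPolynomial (Fin 6) ℂ := X 0

/-- The variable `u_{i+1}` (0-based `i : Fin 5`). -/
noncomputable def u (i : Fin 5) : MvPolynomial (Fin 6) ℂ := X i.succ

/-- The ideal `⟨∑uᵢ, uᵢu_j − x² (i≠j), u_l² + 4x², uᵢx⟩ ⊂ ℂ[x,u₁,…,u₅]`. -/
noncomputable def I : Ideal (MvPolynomial (Fin 6) ℂ) :=
  Ideal.span
    ({∑ i, u i} ∪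
      {p | ∃ i j : Fin 5, i ≠ j ∧ p = u i * u j - xx ^ 2} ∪
      {p | ∃ l : Fin 5, p = u l ^ 2 + 4 * xx ^ 2} ∪
      {p | ∃ i : Fin 5, p = u i * xx})

noncomputable abbrev Q : MvPolynomial (Fin 6) ℂ →+* MvPolynomial (Fin 6) ℂ ⧸ I :=
  Ideal.Quotient.mk I

set_option maxHeartbeats 2000000 in
/-- In `R = ℂ[x,u₁,…,u₅]/I`, with
`D¹² = u₂−u₃`, `D¹³ = u₄−u₅`, `D¹⁴ = √5(2x+u₂+u₃)`, `D¹⁵ = √5(−2x+u₄+u₅)`,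
`D²³ = (1/√5)(a(u₂+u₃)+b(u₄+u₅)+cx)` where `b = −a−10`, `c = 5a+25`,
`a² + 10a + 15 = 0`, one has `D¹ⁱD¹ʲ = 0` (`i ≠ j`), `D¹²D²³ = D¹³D²³ = 0`,
`(D¹²)² = (D¹³)² = (D¹⁴)² = (D¹⁵)² = (D²³)² = −10x²`, and
`D¹⁴D²³ = D¹⁵D²³ = 10x²`. -/
theorem stmt15 (a : ℂ) (ha : a ^ 2 + 10 * a + 15 = 0)
    (b c : ℂ) (hb : b = -a - 10) (hc : c = 5 * a + 25)
    (D12 D13 D14 D15 D23 : MvPolynomial (Fin 6) ℂ ⧸ I)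
    (h12 : D12 = Q (u 1 - u 2))
    (h13 : D13 = Q (u 3 - u 4))
    (h14 : D14 = (Real.sqrt 5 : ℂ) • Q (2 * xx + u 1 + u 2))
    (h15 : D15 = (Real.sqrt 5 : ℂ) • Q (-(2 * xx) + u 3 + u 4))
    (h23 : D23 = ((Real.sqrt 5 : ℂ))⁻¹ •
      Q (MvPolynomial.C a * (u 1 + u 2) + MvPolynomial.C b * (u 3 + u 4) +
        MvPolynomial.C c * xx)) :
    D12 * D13 = 0 ∧ D12 * D14 = 0 ∧ D12 * D15 = 0 ∧
    D13 * D14 = 0 ∧ D13 * D15 = 0 ∧ D14 * D15 = 0 ∧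
    D12 * D23 = 0 ∧ D13 * D23 = 0 ∧
    D12 ^ 2 = -10 * Q (xx ^ 2) ∧ D13 ^ 2 = -10 * Q (xx ^ 2) ∧
    D14 ^ 2 = -10 * Q (xx ^ 2) ∧ D15 ^ 2 = -10 * Q (xx ^ 2) ∧
    D23 ^ 2 = -10 * Q (xx ^ 2) ∧
    D14 * D23 = 10 * Q (xx ^ 2) ∧ D15 * D23 = 10 * Q (xx ^ 2) := by
  subst hb hc h12 h13 h14 h15 h23
  have gen0 : ∀ p ∈ ({∑ i, u i} ∪
      {p | ∃ i j : Fin 5, i ≠ j ∧ p = u i * u j - xx ^ 2} ∪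
      {p | ∃ l : Fin 5, p = u l ^ 2 + 4 * xx ^ 2} ∪
      {p | ∃ i : Fin 5, p = u i * xx}), Q p = 0 :=
    fun p hp => Ideal.Quotient.eq_zero_iff_mem.mpr (Ideal.subset_span hp)
  have e : ∀ i j : Fin 5, i ≠ j → Q (u i) * Q (u j) = Q xx ^ 2 := by
    intro i j h
    have h0 := gen0 _ (Or.inl (Or.inl (Or.inr ⟨i, j, h, rfl⟩)))
    rw [map_sub, map_mul, map_pow, sub_eq_zero] at h0
    exact h0
  have q : ∀ l : Fin 5, Q (u l) ^ 2 = -(4 * Q xx ^ 2) := by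
    intro l
    have h0 := gen0 _ (Or.inl (Or.inr ⟨l, rfl⟩))
    rw [map_add, map_pow, map_mul, map_pow, map_ofNat] at h0
    exact eq_neg_of_add_eq_zero_left h0
  have z : ∀ i : Fin 5, Q (u i) * Q xx = 0 := by
    intro i
    have h0 := gen0 _ (Or.inr ⟨i, rfl⟩)
    rw [map_mul] at h0
    exact h0
  set A := algebraMap ℂ (MvPolynomial (Fin 6) ℂ ⧸ I) with hA
  have hQC : ∀ r : ℂ, Q (MvPolynomial.C r) = A r := fun r => rfl
  have hsmul : ∀ (r : ℂ) (x : MvPolynomial (Fin 6) ℂ ⧸ I), r • x = A r * x :=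
    fun r x => Algebra.smul_def r x
  have hs5 : ((Real.sqrt 5 : ℝ) : ℂ) ^ 2 = 5 := by
    rw [← Complex.ofReal_pow, Real.sq_sqrt (by norm_num : (5:ℝ) ≥ 0)]
    norm_num
  have hs5ne : ((Real.sqrt 5 : ℝ) : ℂ) ≠ 0 := by
    simp [Real.sqrt_eq_zero']
  have hs2 : A ((Real.sqrt 5 : ℝ) : ℂ) ^ 2 = 5 := by
    rw [← map_pow, hs5, map_ofNat]
  have hsi : A ((Real.sqrt 5 : ℝ) : ℂ) * A (((Real.sqrt 5 : ℝ) : ℂ))⁻¹ = 1 := by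
    rw [← map_mul, mul_inv_cancel₀ hs5ne, map_one]
  have h5si : 5 * A (((Real.sqrt 5 : ℝ) : ℂ))⁻¹ ^ 2 = 1 := by
    linear_combination (-(A (((Real.sqrt 5 : ℝ) : ℂ))⁻¹)^2) * hs2 +
      (A ((Real.sqrt 5 : ℝ) : ℂ) * A (((Real.sqrt 5 : ℝ) : ℂ))⁻¹ + 1) * hsi
  have ha' : A a ^ 2 + 10 * A a + 15 = 0 := by
    have := congrArg A ha
    rw [map_add, map_add, map_pow, map_mul, map_ofNat, map_ofNat, map_zero] at this
    exact this
  have hab : A (-a - 10) = -(A a) - 10 := by rw [map_sub, map_neg, map_ofNat]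
  have hac : A (5 * a + 25) = 5 * A a + 25 := by rw [map_add, map_mul, map_ofNat, map_ofNat]
  simp only [map_sub, map_add, map_mul, map_neg, map_ofNat, hQC, hsmul, hab, hac, map_pow]
  set s := A ((Real.sqrt 5 : ℝ) : ℂ)
  set si := A (((Real.sqrt 5 : ℝ) : ℂ))⁻¹
  set t := Q xx
  set v1 := Q (u 1); set v2 := Q (u 2); set v3 := Q (u 3); set v4 := Q (u 4)
  set aa := A a
  have e12 := e 1 2 (by decide); have e13 := e 1 3 (by decide)
  have e14 := e 1 4 (by decide); have e23 := e 2 3 (by decide)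
  have e24 := e 2 4 (by decide); have e34 := e 3 4 (by decide)
  have q1 := q 1; have q2 := q 2; have q3 := q 3; have q4 := q 4
  have z1 := z 1; have z2 := z 2; have z3 := z 3; have z4 := z 4
  refine ⟨?_, ?_, ?_, ?_, ?_, ?_, ?_, ?_, ?_, ?_, ?_, ?_, ?_, ?_, ?_⟩
  · linear_combination e13 - e14 - e23 + e24
  · linear_combination s * (2*z1 - 2*z2 + q1 - q2)
  · linear_combination s * (-2*z1 + 2*z2 + e13 + e14 - e23 - e24)
  · linear_combination s * (2*z3 - 2*z4 + e13 + e23 - e14 - e24)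
  · linear_combination s * (-2*z3 + 2*z4 + q3 - q4)
  · linear_combination s^2 * (2*z3 + 2*z4 - 2*z1 - 2*z2 + e13 + e14 + e23 + e24)
  · linear_combination si * (aa*(q1 - q2) + (-(aa)-10)*(e13 + e14 - e23 - e24) + (5*aa+25)*(z1 - z2))
  · linear_combination si * (aa*(e13 + e23 - e14 - e24) + (-(aa)-10)*(q3 - q4) + (5*aa+25)*(z3 - z4))
  · linear_combination q1 + q2 - 2*e12
  · linear_combination q3 + q4 - 2*e34
  · linear_combination s^2 * (q1 + q2 + 2*e12 + 4*z1 + 4*z2) + (-2*t^2) * hs2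
  · linear_combination s^2 * (q3 + q4 + 2*e34 - 4*z3 - 4*z4) + (-2*t^2) * hs2
  · linear_combination si^2 * (aa^2*(q1 + q2 + 2*e12) + (-(aa)-10)^2*(q3 + q4 + 2*e34) +
      2*aa*(-(aa)-10)*(e13 + e14 + e23 + e24) + 2*aa*(5*aa+25)*(z1 + z2) +
      2*(-(aa)-10)*(5*aa+25)*(z3 + z4)) + 5*si^2*t^2 * ha' + (-10*t^2) * h5si
  · linear_combination s*si * (aa*(q1 + q2 + 2*e12) + (-(aa)-10)*(e13 + e14 + e23 + e24) +
      (7*aa+25)*(z1 + z2) + 2*(-(aa)-10)*(z3+z4) ) + 10*t^2 * hsi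
  · linear_combination s*si * (aa*(e13 + e14 + e23 + e24) + (-(aa)-10)*(q3 + q4 + 2*e34) + (-2*aa)*(z1+z2) + (7*aa+45)*(z3+z4)) + 10*t^2 * hsi

end Stmt15
end

section
/- In the ring R = ℂ[u₂,u₃,u₄,u₅]/I with I generated by u₂u₃−u₂u₄, u₂u₄−u₂u₅, u₃u₄−u₃u₅, u₃u₅−u₄u₅, u₃u₄+9u₂u₃, u₂²−11u₂u₃, u₃²−16u₂u₃, u₄²−16u₂u₃, u₅²−16u₂u₃, define D²³ = u₂−u₃, D²⁴ = u₂−u₄, D²⁵ = u₂−u₅, D²³⁴ = −u₂−u₃−u₄−2u₅. Then D²³D²⁴ = D²³D²⁵ = D²⁴D²⁵ = D²⁵D²³⁴ = 0, and (D²³)² = (D²⁴)² = (D²⁵)² = (D²³⁴)² = −D²³D²³⁴ = −D²⁴D²³⁴ = 25u₂u₃. -/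
open MvPolynomial

namespace Stmt16

/-- Variables `u₂, u₃, u₄, u₅` of `ℂ[u₂,…,u₅]`, with `u i = u_{i+2}`. -/
noncomputable def u (i : Fin 4) : MvPolynomial (Fin 4) ℂ := X i

/-- The ideal `I = (u₂u₃−u₂u₄, u₂u₄−u₂u₅, u₃u₄−u₃u₅, u₃u₅−u₄u₅,
u₃u₄+9u₂u₃, u₂²−11u₂u₃, u₃²−16u₂u₃, u₄²−16u₂u₃, u₅²−16u₂u₃)`. -/
noncomputable def I : Ideal (MvPolynomial (Fin 4) ℂ) :=
  Ideal.span
    {u 0 * u 1 - u 0 * u 2, u 0 * u 2 - u 0 * u 3,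
     u 1 * u 2 - u 1 * u 3, u 1 * u 3 - u 2 * u 3,
     u 1 * u 2 + 9 * (u 0 * u 1),
     u 0 ^ 2 - 11 * (u 0 * u 1), u 1 ^ 2 - 16 * (u 0 * u 1),
     u 2 ^ 2 - 16 * (u 0 * u 1), u 3 ^ 2 - 16 * (u 0 * u 1)}

noncomputable abbrev Q : MvPolynomial (Fin 4) ℂ →+* MvPolynomial (Fin 4) ℂ ⧸ I :=
  Ideal.Quotient.mk I

set_option maxHeartbeats 2000000 in
/-- In `R = ℂ[u₂,…,u₅]/I`, with `D²³ = u₂−u₃`, `D²⁴ = u₂−u₄`,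
`D²⁵ = u₂−u₅`, `D²³⁴ = −u₂−u₃−u₄−2u₅`, one has
`D²³D²⁴ = D²³D²⁵ = D²⁴D²⁵ = D²⁵D²³⁴ = 0` and
`(D²³)² = (D²⁴)² = (D²⁵)² = (D²³⁴)² = −D²³D²³⁴ = −D²⁴D²³⁴ = 25u₂u₃`. -/
theorem stmt16 (D23 D24 D25 D234 : MvPolynomial (Fin 4) ℂ ⧸ I)
    (h23 : D23 = Q (u 0 - u 1))
    (h24 : D24 = Q (u 0 - u 2))
    (h25 : D25 = Q (u 0 - u 3))
    (h234 : D234 = Q (-u 0 - u 1 - u 2 - 2 * u 3)) :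
    D23 * D24 = 0 ∧ D23 * D25 = 0 ∧ D24 * D25 = 0 ∧ D25 * D234 = 0 ∧
    D23 ^ 2 = 25 * Q (u 0 * u 1) ∧ D24 ^ 2 = 25 * Q (u 0 * u 1) ∧
    D25 ^ 2 = 25 * Q (u 0 * u 1) ∧ D234 ^ 2 = 25 * Q (u 0 * u 1) ∧
    -(D23 * D234) = 25 * Q (u 0 * u 1) ∧ -(D24 * D234) = 25 * Q (u 0 * u 1) := by
  set a := Q (u 0) with ha
  set b := Q (u 1) with hb
  set c := Q (u 2) with hc
  set d := Q (u 3) with hd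
  have e1 : a * b - a * c = 0 := by
    have hm : (u 0 * u 1 - u 0 * u 2 : MvPolynomial (Fin 4) ℂ) ∈ I := Ideal.subset_span (Set.mem_insert _ _)
    have := Ideal.Quotient.eq_zero_iff_mem.mpr hm
    simpa [map_sub, map_add, map_mul, map_pow, map_ofNat, ← ha, ← hb, ← hc, ← hd] using this
  have e2 : a * c - a * d = 0 := by
    have hm : (u 0 * u 2 - u 0 * u 3 : MvPolynomial (Fin 4) ℂ) ∈ I := Ideal.subset_span (Set.mem_insert_of_mem _ (Set.mem_insert _ _))
    have := Ideal.Quotient.eq_zero_iff_mem.mpr hm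
    simpa [map_sub, map_add, map_mul, map_pow, map_ofNat, ← ha, ← hb, ← hc, ← hd] using this
  have e3 : b * c - b * d = 0 := by
    have hm : (u 1 * u 2 - u 1 * u 3 : MvPolynomial (Fin 4) ℂ) ∈ I := Ideal.subset_span (Set.mem_insert_of_mem _ (Set.mem_insert_of_mem _ (Set.mem_insert _ _)))
    have := Ideal.Quotient.eq_zero_iff_mem.mpr hm
    simpa [map_sub, map_add, map_mul, map_pow, map_ofNat, ← ha, ← hb, ← hc, ← hd] using this
  have e4 : b * d - c * d = 0 := by
    have hm : (u 1 * u 3 - u 2 * u 3 : MvPolynomial (Fin 4) ℂ) ∈ I := Ideal.subset_span (Set.mem_insert_of_mem _ (Set.mem_insert_of_mem _ (Set.mem_insert_of_mem _ (Set.mem_insert _ _))))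
    have := Ideal.Quotient.eq_zero_iff_mem.mpr hm
    simpa [map_sub, map_add, map_mul, map_pow, map_ofNat, ← ha, ← hb, ← hc, ← hd] using this
  have e5 : b * c + 9 * (a * b) = 0 := by
    have hm : (u 1 * u 2 + 9 * (u 0 * u 1) : MvPolynomial (Fin 4) ℂ) ∈ I := Ideal.subset_span (Set.mem_insert_of_mem _ (Set.mem_insert_of_mem _ (Set.mem_insert_of_mem _ (Set.mem_insert_of_mem _ (Set.mem_insert _ _)))))
    have := Ideal.Quotient.eq_zero_iff_mem.mpr hm
    simpa [map_sub, map_add, map_mul, map_pow, map_ofNat, ← ha, ← hb, ← hc, ← hd] using this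
  have e6 : a ^ 2 - 11 * (a * b) = 0 := by
    have hm : (u 0 ^ 2 - 11 * (u 0 * u 1) : MvPolynomial (Fin 4) ℂ) ∈ I := Ideal.subset_span (Set.mem_insert_of_mem _ (Set.mem_insert_of_mem _ (Set.mem_insert_of_mem _ (Set.mem_insert_of_mem _ (Set.mem_insert_of_mem _ (Set.mem_insert _ _))))))
    have := Ideal.Quotient.eq_zero_iff_mem.mpr hm
    simpa [map_sub, map_add, map_mul, map_pow, map_ofNat, ← ha, ← hb, ← hc, ← hd] using this
  have e7 : b ^ 2 - 16 * (a * b) = 0 := by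
    have hm : (u 1 ^ 2 - 16 * (u 0 * u 1) : MvPolynomial (Fin 4) ℂ) ∈ I := Ideal.subset_span (Set.mem_insert_of_mem _ (Set.mem_insert_of_mem _ (Set.mem_insert_of_mem _ (Set.mem_insert_of_mem _ (Set.mem_insert_of_mem _ (Set.mem_insert_of_mem _ (Set.mem_insert _ _)))))))
    have := Ideal.Quotient.eq_zero_iff_mem.mpr hm
    simpa [map_sub, map_add, map_mul, map_pow, map_ofNat, ← ha, ← hb, ← hc, ← hd] using this
  have e8 : c ^ 2 - 16 * (a * b) = 0 := by
    have hm : (u 2 ^ 2 - 16 * (u 0 * u 1) : MvPolynomial (Fin 4) ℂ) ∈ I := Ideal.subset_span (Set.mem_insert_of_mem _ (Set.mem_insert_of_mem _ (Set.mem_insert_of_mem _ (Set.mem_insert_of_mem _ (Set.mem_insert_of_mem _ (Set.mem_insert_of_mem _ (Set.mem_insert_of_mem _ (Set.mem_insert _ _))))))))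
    have := Ideal.Quotient.eq_zero_iff_mem.mpr hm
    simpa [map_sub, map_add, map_mul, map_pow, map_ofNat, ← ha, ← hb, ← hc, ← hd] using this
  have e9 : d ^ 2 - 16 * (a * b) = 0 := by
    have hm : (u 3 ^ 2 - 16 * (u 0 * u 1) : MvPolynomial (Fin 4) ℂ) ∈ I := Ideal.subset_span (Set.mem_insert_of_mem _ (Set.mem_insert_of_mem _ (Set.mem_insert_of_mem _ (Set.mem_insert_of_mem _ (Set.mem_insert_of_mem _ (Set.mem_insert_of_mem _ (Set.mem_insert_of_mem _ (Set.mem_insert_of_mem _ (rfl)))))))))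
    have := Ideal.Quotient.eq_zero_iff_mem.mpr hm
    simpa [map_sub, map_add, map_mul, map_pow, map_ofNat, ← ha, ← hb, ← hc, ← hd] using this
  subst h23 h24 h25 h234
  simp only [map_sub, map_neg, map_mul, map_ofNat, ← ha, ← hb, ← hc, ← hd]
  refine ⟨?_, ?_, ?_, ?_, ?_, ?_, ?_, ?_, ?_, ?_⟩
  · linear_combination e1 + e5 + e6
  · linear_combination e1 + e2 - e3 + e5 + e6
  · linear_combination 2*e1 + e2 - e3 - e4 + e5 + e6
  · linear_combination 2*e1 + e2 - 2*e3 - e4 + 2*e5 - e6 + 2*e9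
  · linear_combination e6 + e7
  · linear_combination 2*e1 + e6 + e8
  · linear_combination 2*e1 + 2*e2 + e6 + e9
  · linear_combination -6*e1 - 4*e2 - 8*e3 - 4*e4 + 10*e5 + e6 + e7 + e8 + 4*e9
  · linear_combination -3*e1 - 2*e2 + 2*e3 - 3*e5 + e6 - e7
  · linear_combination -2*e1 - 2*e2 + 2*e3 + 2*e4 - 3*e5 + e6 - e8
end Stmt16
end
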